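/- Fix ε, δ ∈ (0,1), r ∈ (0,1/2) with rN ∈ ℕ, and let H be the p-spin Gaussian process on {-1,1}^N. Then P(∃ σ₀ ∈ L_ε : min_{τ ∈ S_r(σ₀)} G_{σ₀}(τ) < -N β_c(1-ε)δ(1-c_p(r))) ≤ 2^N Φ(√N β_c(1-ε)) · C(N, rN) · Φ(√N β_c(1-ε)δ·(1-c_p(r))/√(1-c_p(r)²)). -/

import Mathlib

open MeasureTheory ProbabilityTheory Real Finset

def hamDist {N : ℕ} (σ τ : Fin N → Bool) : ℕ :=
  (Finset.univ.filter fun i => σ i ≠ τ i).card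

noncomputable def covFn (p : ℕ) (x : ℝ) : ℝ := (1 - x / 2) ^ p

noncomputable def betaC : ℝ := Real.sqrt (2 * Real.log 2)

noncomputable def gaussTail (u : ℝ) : ℝ :=
  (Real.sqrt (2 * Real.pi))⁻¹ * ∫ x in Set.Ici u, Real.exp (-x ^ 2 / 2)

open scoped NNReal

/-! Union bound over the `2^N` centres `σ₀` and the `C(N, k)` points `τ` of each sphere; for a
fixed pair the two events are independent Gaussian lower tails, whose probabilities are the
`gaussTail` values of the thresholds divided by the standard deviations. -/

lemma gaussTail_eq_measureReal_Ioi (u : ℝ) :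
    gaussTail u = (gaussianReal 0 1).real (Set.Ioi u) := by
  rw [measureReal_def, gaussianReal_apply_eq_integral 0 one_ne_zero,
    ENNReal.toReal_ofReal (setIntegral_nonneg measurableSet_Ioi
      fun x _ => gaussianPDFReal_nonneg _ _ _), gaussTail, integral_Ici_eq_integral_Ioi,
    ← integral_const_mul]
  simp [gaussianPDFReal]

section

variable {Ω : Type*} [MeasurableSpace Ω] {μ : Measure Ω}

lemma hasLaw_of_map_eq {𝓧 : Type*} [MeasurableSpace 𝓧] {X : Ω → 𝓧} {ν : Measure 𝓧}
    [NeZero ν] (hX : μ.map X = ν) : HasLaw X ν μ :=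
  ⟨aemeasurable_of_map_neZero (by rw [hX]; infer_instance), hX⟩

lemma measureReal_lt_neg_eq_gaussTail {X : Ω → ℝ} {v : ℝ≥0} (hv : v ≠ 0)
    (hX : HasLaw X (gaussianReal 0 v) μ) (t : ℝ) :
    μ.real {ω | X ω < -t} = gaussTail (t / √v) := by
  have hsv : 0 < √(v : ℝ) := Real.sqrt_pos.mpr (by positivity)
  have hY : HasLaw (fun ω => -(√v)⁻¹ * X ω) (gaussianReal 0 1) μ := by
    convert gaussianReal_const_mul hX (-(√v)⁻¹) using 2
    · simp
    · ext
      simp [inv_pow, inv_mul_cancel₀ (NNReal.coe_ne_zero.mpr hv)]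
  have hset : {ω | X ω < -t} = {ω | t / √v < -(√v)⁻¹ * X ω} := by
    ext ω
    simp only [Set.mem_ofPred_eq]
    rw [neg_mul, inv_mul_eq_div, lt_neg, ← neg_div, div_lt_div_iff_of_pos_right hsv]
  rw [hset, hY.measureReal_eq measurableSet_Ioi, gaussTail_eq_measureReal_Ioi]
  rfl

lemma measureReal_inter_lt_neg_eq_gaussTail_mul {X Y : Ω → ℝ} {v w : ℝ≥0} (hv : v ≠ 0)
    (hw : w ≠ 0) (hX : HasLaw X (gaussianReal 0 v) μ) (hY : HasLaw Y (gaussianReal 0 w) μ)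
    (hXY : IndepFun X Y μ) (s t : ℝ) :
    μ.real ({ω | X ω < -s} ∩ {ω | Y ω < -t}) =
      gaussTail (s / √v) * gaussTail (t / √w) := by
  rw [← measureReal_lt_neg_eq_gaussTail hv hX, ← measureReal_lt_neg_eq_gaussTail hw hY,
    measureReal_def, measureReal_def, measureReal_def, ← ENNReal.toReal_mul]
  exact congrArg ENNReal.toReal
    (hXY.measure_inter_preimage_eq_mul _ _ measurableSet_Iio measurableSet_Iio)

lemma measureReal_iUnion_biUnion_le {α β : Type*} [IsFiniteMeasure μ] [Fintype α]
    (S : α → Finset β) (E : α → β → Set Ω) {m : ℕ} (hS : ∀ a, #(S a) = m) {q : ℝ}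
    (hE : ∀ a, ∀ b ∈ S a, μ.real (E a b) ≤ q) :
    μ.real (⋃ a, ⋃ b ∈ S a, E a b) ≤ Fintype.card α * m * q :=
  calc μ.real (⋃ a, ⋃ b ∈ S a, E a b)
      ≤ ∑ a, μ.real (⋃ b ∈ S a, E a b) := measureReal_iUnion_fintype_le _
    _ ≤ ∑ a, ∑ b ∈ S a, μ.real (E a b) :=
      sum_le_sum fun a _ => measureReal_biUnion_finset_le _ _
    _ ≤ ∑ a : α, ∑ b ∈ S a, q := sum_le_sum fun a _ => sum_le_sum (hE a)
    _ = Fintype.card α * m * q := by simp [hS, mul_assoc]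

end

lemma card_hamDist_eq {N : ℕ} (σ : Fin N → Bool) (k : ℕ) :
    #{τ | hamDist σ τ = k} = N.choose k := by
  rw [show N.choose k = #(powersetCard k (univ : Finset (Fin N))) by simp]
  have hflip (s : Finset (Fin N)) (i : Fin N) :
      σ i ≠ (σ i ^^ decide (i ∈ s)) ↔ i ∈ s := by
    cases σ i <;> simp
  refine card_nbij' (fun τ => ({i | σ i ≠ τ i} : Finset (Fin N)))
    (fun s i => σ i ^^ decide (i ∈ s)) ?_ ?_ ?_ ?_
  · intro τ hτ
    simp_all [hamDist]
  · intro s hs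
    simp_all [hamDist]
  · intro τ _
    funext i
    cases hσ : σ i <;> cases hτ : τ i <;> simp [hσ, hτ]
  · intro s _
    ext i
    simpa using hflip s i

lemma covFn_sq_lt_one {p : ℕ} (hp : p ≠ 0) {r : ℝ} (hr0 : 0 < r) (hr : r < 4) :
    covFn p r ^ 2 < 1 := by
  rw [covFn, ← pow_mul, mul_comm, pow_mul]
  exact pow_lt_one₀ (sq_nonneg _) (by nlinarith) hp

theorem stmt_16_general {Ω : Type*} [MeasurableSpace Ω] (μ : Measure Ω) [IsProbabilityMeasure μ]
    (N p : ℕ) (hN : 1 ≤ N) (hp : 1 ≤ p)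
    (ε δ : ℝ)
    (r : ℝ) (hr0 : 0 < r) (hr1 : r < 1 / 2) (k : ℕ)
    (H : (Fin N → Bool) → Ω → ℝ)
    -- one-point marginals of the `p`-spin Gaussian process:
    (hlaw : ∀ σ, μ.map (H σ) = gaussianReal 0 N)
    -- for `τ` on the sphere of radius `rN` around `σ₀`, the Gaussian decomposition
    -- `G_{σ₀}(τ) = H(τ) - H(σ₀) c_p(r)` is centered Gaussian with variance `N(1-c_p(r)²)` …
    (hlawG : ∀ σ₀ τ : Fin N → Bool, hamDist σ₀ τ = k →
      μ.map (fun ω => H τ ω - H σ₀ ω * covFn p r) =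
        gaussianReal 0 ((N * (1 - covFn p r ^ 2)).toNNReal))
    -- … and independent of `H(σ₀)`:
    (hindep : ∀ σ₀ τ : Fin N → Bool, hamDist σ₀ τ = k →
      IndepFun (H σ₀) (fun ω => H τ ω - H σ₀ ω * covFn p r) μ) :
    (μ {ω | ∃ σ₀ : Fin N → Bool, betaC * (1 - ε) * N < -H σ₀ ω ∧
        ∃ τ : Fin N → Bool, hamDist σ₀ τ = k ∧
          H τ ω - H σ₀ ω * covFn p r <
            -(N * betaC * (1 - ε) * δ * (1 - covFn p r))}).toReal ≤
      2 ^ N * gaussTail (Real.sqrt N * betaC * (1 - ε)) * (N.choose k) *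
        gaussTail (Real.sqrt N * betaC * (1 - ε) * δ * (1 - covFn p r) /
          Real.sqrt (1 - covFn p r ^ 2)) := by
  set c := covFn p r
  have hN0 : (0 : ℝ) < N := by exact_mod_cast hN
  have hc : 0 < 1 - c ^ 2 := sub_pos.mpr (covFn_sq_lt_one (by omega) hr0 (by linarith))
  have hvA : (N : ℝ≥0) ≠ 0 := by exact_mod_cast (by omega : N ≠ 0)
  have hvB : (N * (1 - c ^ 2)).toNNReal ≠ 0 := by
    simp only [ne_eq, Real.toNNReal_eq_zero, not_le]
    positivity
  have hpair (σ₀ τ : Fin N → Bool) (hστ : hamDist σ₀ τ = k) :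
      μ.real ({ω | H σ₀ ω < -(betaC * (1 - ε) * N)} ∩
        {ω | H τ ω - H σ₀ ω * c < -(N * betaC * (1 - ε) * δ * (1 - c))}) =
      gaussTail (√N * betaC * (1 - ε)) *
        gaussTail (√N * betaC * (1 - ε) * δ * (1 - c) / √(1 - c ^ 2)) := by
    rw [measureReal_inter_lt_neg_eq_gaussTail_mul hvA hvB (hasLaw_of_map_eq (hlaw σ₀))
      (hasLaw_of_map_eq (hlawG σ₀ τ hστ)) (hindep σ₀ τ hστ)]
    congr 2
    · rw [NNReal.coe_natCast, mul_div_assoc, div_sqrt]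
      ring
    · rw [Real.coe_toNNReal _ (by positivity), Real.sqrt_mul hN0.le]
      field_simp
      rw [Real.sq_sqrt hN0.le]
      ring
  refine (measureReal_mono ?_).trans ((measureReal_iUnion_biUnion_le
    (fun σ₀ => ({τ | hamDist σ₀ τ = k} : Finset _)) _ (card_hamDist_eq · k)
    fun σ₀ τ hτ => (hpair σ₀ τ (by simpa using hτ)).le).trans_eq ?_)
  · rintro ω ⟨σ₀, hσ₀, τ, hστ, hτ⟩
    simp only [Set.mem_iUnion, Set.mem_inter_iff, Set.mem_ofPred_eq]
    exact ⟨σ₀, τ, by simpa using hστ, by linarith, hτ⟩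
  · simp only [Fintype.card_pi, Fintype.card_bool, prod_const, card_univ, Fintype.card_fin,
      Nat.cast_pow, Nat.cast_ofNat]
    ring

theorem stmt_16 {Ω : Type*} [MeasurableSpace Ω] (μ : Measure Ω) [IsProbabilityMeasure μ]
    (N p : ℕ) (hN : 1 ≤ N) (hp : 1 ≤ p)
    (ε δ : ℝ) (hε : ε ∈ Set.Ioo (0 : ℝ) 1) (hδ : δ ∈ Set.Ioo (0 : ℝ) 1)
    (r : ℝ) (hr0 : 0 < r) (hr1 : r < 1 / 2) (k : ℕ) (hk : (k : ℝ) = r * N)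
    (H : (Fin N → Bool) → Ω → ℝ) (hmeas : ∀ σ, Measurable (H σ))
    -- one-point marginals of the `p`-spin Gaussian process:
    (hlaw : ∀ σ, μ.map (H σ) = gaussianReal 0 N)
    -- for `τ` on the sphere of radius `rN` around `σ₀`, the Gaussian decomposition
    -- `G_{σ₀}(τ) = H(τ) - H(σ₀) c_p(r)` is centered Gaussian with variance `N(1-c_p(r)²)` …
    (hlawG : ∀ σ₀ τ : Fin N → Bool, hamDist σ₀ τ = k →
      μ.map (fun ω => H τ ω - H σ₀ ω * covFn p r) =
        gaussianReal 0 ((N * (1 - covFn p r ^ 2)).toNNReal))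
    -- … and independent of `H(σ₀)`:
    (hindep : ∀ σ₀ τ : Fin N → Bool, hamDist σ₀ τ = k →
      IndepFun (H σ₀) (fun ω => H τ ω - H σ₀ ω * covFn p r) μ) :
    (μ {ω | ∃ σ₀ : Fin N → Bool, betaC * (1 - ε) * N < -H σ₀ ω ∧
        ∃ τ : Fin N → Bool, hamDist σ₀ τ = k ∧
          H τ ω - H σ₀ ω * covFn p r <
            -(N * betaC * (1 - ε) * δ * (1 - covFn p r))}).toReal ≤
      2 ^ N * gaussTail (Real.sqrt N * betaC * (1 - ε)) * (N.choose k) *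
        gaussTail (Real.sqrt N * betaC * (1 - ε) * δ * (1 - covFn p r) /
          Real.sqrt (1 - covFn p r ^ 2)) :=
  stmt_16_general μ N p hN hp ε δ r hr0 hr1 k H hlaw hlawG hindep
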